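/- arXiv:1703.02114 — 2 statements merged into one kernel-verified Lean document; each statement's English description precedes it below -/
import Mathlib

section
/- Let V ⊆ S be an inclusion of valuation domains such that the maximal ideal of V is nonzero, inducing an inclusion K ⊆ L of their fraction fields. Then S is a content V-algebra if and only if the induced group homomorphism K×/V× → L×/S× between the value groups (induced by the inclusion of unit groups K× ⊆ L×) is an isomorphism. -/
section OhmRushDefs

variable {R S : Type*} [CommRing R] [CommRing S]

/-- The Ohm–Rush content of an element `s` of an `R`-algebra `S` (given by a ring
homomorphism `f : R →+* S`): the intersection of all ideals `I` of `R` with `s ∈ IS`. -/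
def ORContent (f : R →+* S) (s : S) : Ideal R :=
  sInf {I : Ideal R | s ∈ Ideal.map f I}

/-- `S` is an Ohm–Rush `R`-algebra if every `s ∈ S` lies in the extension of its content. -/
def IsOhmRushAlgebra (f : R →+* S) : Prop :=
  ∀ s : S, s ∈ Ideal.map f (ORContent f s)

/-- Flatness of a ring homomorphism. -/
def RingHomFlat (f : R →+* S) : Prop :=
  letI := f.toAlgebra; Module.Flat R S

/-- Faithful flatness of a ring homomorphism. -/
def RingHomFaithfullyFlat (f : R →+* S) : Prop :=
  letI := f.toAlgebra; Module.FaithfullyFlat R S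

/-- Module-freeness of a ring homomorphism. -/
def RingHomFree (f : R →+* S) : Prop :=
  letI := f.toAlgebra; Module.Free R S

/-- Weak content algebra: Ohm–Rush and `√c(fg) = √(c(f)c(g))`. -/
def IsWeakContentAlgebra (f : R →+* S) : Prop :=
  IsOhmRushAlgebra f ∧ ∀ s t : S,
    (ORContent f (s * t)).radical = (ORContent f s * ORContent f t).radical

/-- Semicontent algebra: faithfully flat Ohm–Rush, and for every multiplicative subset `W`
of `R`, if `c(s)R_W = R_W` then `c(st)R_W = c(t)R_W`. -/
def IsSemicontentAlgebra (f : R →+* S) : Prop :=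
  IsOhmRushAlgebra f ∧ RingHomFaithfullyFlat f ∧
    ∀ (W : Submonoid R) (s t : S),
      Ideal.map (algebraMap R (Localization W)) (ORContent f s) = ⊤ →
      Ideal.map (algebraMap R (Localization W)) (ORContent f (s * t)) =
        Ideal.map (algebraMap R (Localization W)) (ORContent f t)

/-- Content algebra: faithfully flat Ohm–Rush satisfying the Dedekind–Mertens type formula. -/
def IsContentAlgebra (f : R →+* S) : Prop :=
  IsOhmRushAlgebra f ∧ RingHomFaithfullyFlat f ∧
    ∀ s t : S, ∃ n : ℕ, 0 < n ∧
      ORContent f s ^ n * ORContent f t = ORContent f s ^ (n - 1) * ORContent f (s * t)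

/-- A ring homomorphism satisfies INC if comparable primes of `S` with the same
contraction to `R` are equal. -/
def SatisfiesINC (f : R →+* S) : Prop :=
  ∀ Q Q' : Ideal S, Q.IsPrime → Q'.IsPrime → Q ≤ Q' →
    Ideal.comap f Q = Ideal.comap f Q' → Q = Q'

/-- A valuation domain: a domain whose divisibility is total. -/
def IsValuationDomain (A : Type*) [CommRing A] : Prop :=
  IsDomain A ∧ ∀ a b : A, ∃ c : A, a * c = b ∨ b * c = a

/-- A Prüfer domain: a domain whose localization at every maximal ideal is a
valuation domain. -/
def IsPruferDomain (A : Type*) [CommRing A] : Prop :=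
  IsDomain A ∧ ∀ (P : Ideal A) (hP : P.IsMaximal),
    haveI := hP.isPrime
    IsValuationDomain (Localization.AtPrime P)

end OhmRushDefs

/-!
Over a valuation domain `V`, an element of an extended ideal `IS` is divisible by the image of a
single element of `I`; hence Ohm–Rush contents are principal, and `c(s) = (a)` whenever `s` is
associated to the image of `a`. Both sides of the equivalence unfold into the same two conditions
on `V → S`. Injectivity on value groups says `V = S ∩ K`, i.e. divisibility between images of
elements of `V` reflects divisibility in `V`; for a torsion-free extension of a valuation domain
this is faithful flatness. Surjectivity says that every `s ∈ S` is associated to an element of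
`V`, and then `c(s) c(t) = c(st)`. Conversely, in a content algebra write `s = a t` with
`c(s) = (a)`, so that `c(t) = V`. For a nonzero nonunit `π ∈ V` this gives `π ∤ t`, so `t g = π`
for some `g`, and the content formula yields `c(g) = c(tg) = (π)`; thus `π ∣ g` and `t` is a unit.
-/

section OhmRushContent

variable {A B : Type*} [CommRing A] [CommRing B] {f : A →+* B}

theorem Ideal.mem_map_span_singleton {a : A} {x : B} :
    x ∈ (Ideal.span {a}).map f ↔ f a ∣ x := by
  rw [Ideal.map_span, Set.image_singleton, Ideal.mem_span_singleton]

theorem RingHomFaithfullyFlat.dvd_of_map_dvd_map (hf : RingHomFaithfullyFlat f) {a b : A}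
    (h : f a ∣ f b) : a ∣ b := by
  let _ := f.toAlgebra
  have : Module.FaithfullyFlat A B := hf
  rw [← Ideal.mem_span_singleton,
    ← Ideal.comap_map_eq_self_of_faithfullyFlat (B := B) (Ideal.span {a})]
  exact Ideal.mem_map_span_singleton.mpr h

theorem orContent_le_span_singleton_of_dvd {a : A} {x : B} (h : f a ∣ x) :
    ORContent f x ≤ Ideal.span {a} :=
  sInf_le (Ideal.mem_map_span_singleton.mpr h)

theorem IsContentAlgebra.orContent_mul_of_orContent_eq_top (hC : IsContentAlgebra f) {s : B}
    (hs : ORContent f s = ⊤) (t : B) : ORContent f (s * t) = ORContent f t := by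
  obtain ⟨n, -, h⟩ := hC.2.2 s t
  rwa [hs, Ideal.top_pow, Ideal.top_pow, Ideal.top_mul, Ideal.top_mul, eq_comm] at h

section PreValuationRing

variable [PreValuationRing A]

theorem Ideal.mem_map_iff_exists_dvd {I : Ideal A} {x : B} :
    x ∈ I.map f ↔ ∃ a ∈ I, f a ∣ x := by
  refine ⟨fun hx => ?_, fun ⟨a, ha, hax⟩ => Ideal.mem_of_dvd _ hax (Ideal.mem_map_of_mem f ha)⟩
  induction hx using Submodule.span_induction with
  | mem y hy =>
    obtain ⟨a, ha, rfl⟩ := hy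
    exact ⟨a, ha, dvd_rfl⟩
  | zero => exact ⟨0, I.zero_mem, dvd_zero _⟩
  | add y z _ _ hy hz =>
    obtain ⟨a, ha, hay⟩ := hy
    obtain ⟨b, hb, hbz⟩ := hz
    rcases ValuationRing.dvd_total a b with hab | hba
    · exact ⟨a, ha, dvd_add hay ((map_dvd f hab).trans hbz)⟩
    · exact ⟨b, hb, dvd_add ((map_dvd f hba).trans hay) hbz⟩
  | smul r y _ hy =>
    obtain ⟨a, ha, hay⟩ := hy
    exact ⟨a, ha, hay.mul_left r⟩

theorem orContent_eq_span_singleton_of_associated (hf : ∀ a b, f a ∣ f b → a ∣ b) {a : A}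
    {x : B} (h : Associated (f a) x) : ORContent f x = Ideal.span {a} := by
  refine le_antisymm (orContent_le_span_singleton_of_dvd h.dvd) ?_
  rw [Ideal.span_singleton_le_iff_mem]
  refine Submodule.mem_sInf.mpr fun I hI => ?_
  obtain ⟨b, hb, hbx⟩ := Ideal.mem_map_iff_exists_dvd.mp hI
  exact Ideal.mem_of_dvd _ (hf b a (hbx.trans h.symm.dvd)) hb

theorem IsOhmRushAlgebra.exists_orContent_eq_span_singleton (hOR : IsOhmRushAlgebra f) (x : B) :
    ∃ a, f a ∣ x ∧ ORContent f x = Ideal.span {a} := by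
  obtain ⟨a, ha, hax⟩ := Ideal.mem_map_iff_exists_dvd.mp (hOR x)
  exact ⟨a, hax, le_antisymm (orContent_le_span_singleton_of_dvd hax)
    ((Ideal.span_singleton_le_iff_mem _).mpr ha)⟩

theorem orContent_eq_top_of_orContent_map_mul [IsDomain A] {a : A} (ha : a ≠ 0) {t : B}
    (h : ORContent f (f a * t) = Ideal.span {a}) : ORContent f t = ⊤ := by
  rw [Ideal.eq_top_iff_one]
  refine Submodule.mem_sInf.mpr fun I hI => ?_
  obtain ⟨b, hb, hbt⟩ := Ideal.mem_map_iff_exists_dvd.mp hI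
  have hab : Ideal.span {a} ≤ Ideal.span {a * b} := by
    rw [← h]
    exact orContent_le_span_singleton_of_dvd (by rw [map_mul]; exact mul_dvd_mul_left _ hbt)
  obtain ⟨c, hc⟩ := Ideal.mem_span_singleton.mp (hab (Ideal.mem_span_singleton_self a))
  have hbc : b * c = 1 := mul_left_cancel₀ ha (by rw [← mul_assoc, ← hc, mul_one])
  exact Ideal.mem_of_dvd _ ⟨c, hbc.symm⟩ hb

variable [IsDomain B] [PreValuationRing B]

theorem IsContentAlgebra.isUnit_of_orContent_eq_top (hC : IsContentAlgebra f)
    (hf : ∀ a b, f a ∣ f b → a ∣ b) {π : A} (hπ0 : π ≠ 0) (hπ : ¬IsUnit π) {t : B}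
    (ht : ORContent f t = ⊤) : IsUnit t := by
  have hπt : ¬f π ∣ t := fun h => hπ <| Ideal.span_singleton_eq_top.mp <|
    top_le_iff.mp (ht ▸ orContent_le_span_singleton_of_dvd h)
  obtain ⟨g, hg⟩ := (ValuationRing.dvd_total t (f π)).resolve_right hπt
  have hcg : ORContent f g = Ideal.span {π} := by
    rw [← hC.orContent_mul_of_orContent_eq_top ht, ← hg]
    exact orContent_eq_span_singleton_of_associated hf (Associated.refl _)
  have hπg : f π ∣ g := Ideal.mem_map_span_singleton.mp (hcg ▸ hC.1 g)
  have hg0 : g ≠ 0 := by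
    rintro rfl
    exact hπ0 (zero_dvd_iff.mp (hf 0 π (by rw [map_zero, hg, mul_zero])))
  rw [hg] at hπg
  exact isUnit_of_dvd_one ((mul_dvd_mul_iff_right hg0).mp (by rwa [one_mul]))

theorem IsContentAlgebra.exists_associated_map [IsDomain A] (hC : IsContentAlgebra f)
    (hf : ∀ a b, f a ∣ f b → a ∣ b) {π : A} (hπ0 : π ≠ 0) (hπ : ¬IsUnit π) (x : B) :
    ∃ a, Associated (f a) x := by
  obtain ⟨a, ⟨t, rfl⟩, hc⟩ := hC.1.exists_orContent_eq_span_singleton x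
  by_cases ha : a = 0
  · exact ⟨a, by rw [ha, map_zero, zero_mul]⟩
  · exact ⟨a, associated_mul_unit_right _ _ <| hC.isUnit_of_orContent_eq_top hf hπ0 hπ <|
      orContent_eq_top_of_orContent_map_mul ha hc⟩

end PreValuationRing

variable [IsDomain A] [ValuationRing A] [IsDomain B]

theorem ringHomFaithfullyFlat_of_dvd_of_map_dvd (hf : ∀ a b, f a ∣ f b → a ∣ b) :
    RingHomFaithfullyFlat f := by
  let _ := f.toAlgebra
  have : FaithfulSMul A B := (faithfulSMul_iff_algebraMap_injective A B).mpr <|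
    (injective_iff_map_eq_zero f).mpr fun a ha => zero_dvd_iff.mp (hf 0 a (by rw [ha, map_zero]))
  refine (Module.FaithfullyFlat.iff_flat_and_ideal_smul_eq_top A B).mpr ⟨?_, fun I hI => ?_⟩
  · exact Module.Flat.flat_iff_torsion_eq_bot_of_isBezout.mpr
      (Submodule.isTorsionFree_iff_torsion_eq_bot.mp inferInstance)
  · rw [Ideal.smul_top_eq_map, Submodule.restrictScalars_eq_top_iff] at hI
    have h1 : (1 : B) ∈ I.map f := hI ▸ Submodule.mem_top
    obtain ⟨b, hb, hb1⟩ := Ideal.mem_map_iff_exists_dvd.mp h1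
    exact Ideal.eq_top_of_isUnit_mem I hb (isUnit_of_dvd_one (hf b 1 (by rwa [map_one])))

theorem isContentAlgebra_of_forall_exists_associated (hf : ∀ a b, f a ∣ f b → a ∣ b)
    (hx : ∀ x : B, ∃ a, Associated (f a) x) : IsContentAlgebra f := by
  have hc {a : A} {x : B} := orContent_eq_span_singleton_of_associated hf (a := a) (x := x)
  refine ⟨fun x => ?_, ringHomFaithfullyFlat_of_dvd_of_map_dvd hf, fun x y => ⟨1, one_pos, ?_⟩⟩
  · obtain ⟨a, ha⟩ := hx x
    exact hc ha ▸ Ideal.mem_map_span_singleton.mpr ha.dvd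
  · obtain ⟨a, ha⟩ := hx x
    obtain ⟨b, hb⟩ := hx y
    rw [pow_one, Nat.sub_self, pow_zero, one_mul, hc ha, hc hb,
      hc (a := a * b) (by rw [map_mul]; exact ha.mul_mul hb),
      Ideal.span_singleton_mul_span_singleton]

end OhmRushContent

namespace QuotientGroup

variable {G H : Type*} [Group G] [Group H] {N : Subgroup G} [N.Normal] {M : Subgroup H} [M.Normal]
  {f : G →* H} (h : N ≤ M.comap f)

theorem map_injective_iff : Function.Injective (map N M f h) ↔ M.comap f ≤ N := by
  rw [← MonoidHom.ker_eq_bot_iff, ker_map, Subgroup.map_eq_bot_iff, ker_mk']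

theorem map_surjective_iff :
    Function.Surjective (map N M f h) ↔ ∀ y : H, ∃ x : G, (f x : H ⧸ M) = y := by
  refine ⟨fun hs y => ?_, fun hs q => ?_⟩
  · obtain ⟨q, hq⟩ := hs y
    obtain ⟨x, rfl⟩ := mk_surjective q
    exact ⟨x, hq⟩
  · obtain ⟨y, rfl⟩ := mk_surjective q
    obtain ⟨x, hx⟩ := hs y
    exact ⟨x, hx⟩

end QuotientGroup

namespace ValuationSubring

variable {K L : Type*} [Field K] [Field L]

theorem mk_eq_mk_iff_valuation_eq (A : ValuationSubring K) (x y : Kˣ) :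
    (x : Kˣ ⧸ A.unitGroup) = y ↔ A.valuation x = A.valuation y := by
  have hx : A.valuation x ≠ 0 := (Valuation.ne_zero_iff _).mpr x.ne_zero
  rw [QuotientGroup.eq, mem_unitGroup_iff, Units.val_mul, map_mul, Units.val_inv_eq_inv_val,
    map_inv₀, inv_mul_eq_one₀ hx]

theorem mem_unitGroup_iff_mem_and_inv_mem (A : ValuationSubring K) (x : Kˣ) :
    x ∈ A.unitGroup ↔ (x : K) ∈ A ∧ ((x⁻¹ : Kˣ) : K) ∈ A := by
  have hx : 0 < A.valuation x := zero_lt_iff.mpr ((Valuation.ne_zero_iff _).mpr x.ne_zero)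
  rw [mem_unitGroup_iff, ← valuation_le_one_iff, ← valuation_le_one_iff, Units.val_inv_eq_inv_val,
    map_inv₀, inv_le_one₀ hx, le_antisymm_iff]

theorem unitGroup_comap (A : ValuationSubring L) (f : K →+* L) :
    (A.comap f).unitGroup = A.unitGroup.comap (Units.map f.toMonoidHom) := by
  ext x
  rw [Subgroup.mem_comap, mem_unitGroup_iff_mem_and_inv_mem, mem_unitGroup_iff_mem_and_inv_mem]
  simp [mem_comap]

variable [Algebra K L] {V : ValuationSubring K} {S : ValuationSubring L}

theorem comap_le_iff_dvd_of_map_dvd {F : V →+* S.toSubring}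
    (hF : ∀ a, (F a : L) = algebraMap K L a) :
    S.comap (algebraMap K L) ≤ V ↔ ∀ a b : V, F a ∣ F b → a ∣ b := by
  constructor
  · rintro hle a b ⟨c, hc⟩
    have hcL : algebraMap K L b = algebraMap K L a * c := by rw [← hF, ← hF, hc]; rfl
    by_cases ha : (a : K) = 0
    · have hb : b = 0 := Subtype.ext (by simpa [ha] using hcL)
      exact hb ▸ dvd_zero a
    · refine ⟨⟨b / a, hle (mem_comap.mpr ?_)⟩, Subtype.ext ?_⟩
      · rw [map_div₀, hcL, mul_div_cancel_left₀ _ (by simpa using ha)]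
        exact c.2
      · simp [mul_div_cancel₀ _ ha]
  · intro hf k hk
    by_cases hk0 : k = 0
    · exact hk0 ▸ V.zero_mem
    rcases V.mem_or_inv_mem k with hkV | hkV
    · exact hkV
    obtain ⟨c, hc⟩ := hf ⟨k⁻¹, hkV⟩ 1 ⟨⟨algebraMap K L k, hk⟩, Subtype.ext (by simp [hF, hk0])⟩
    have hck : (c : K) = k := by
      have := congrArg Subtype.val hc
      simp only [OneMemClass.coe_one, MulMemClass.coe_mul] at this
      field_simp at this
      exact this.symm
    exact hck ▸ c.2

theorem map_unitGroup_injective_iff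
    (hle : V.unitGroup ≤ S.unitGroup.comap (Units.map (algebraMap K L : K →+* L).toMonoidHom)) :
    Function.Injective (QuotientGroup.map V.unitGroup S.unitGroup
        (Units.map (algebraMap K L : K →+* L).toMonoidHom) hle) ↔
      S.comap (algebraMap K L) ≤ V := by
  rw [QuotientGroup.map_injective_iff, ← unitGroup_comap, unitGroup_le_unitGroup]

theorem map_unitGroup_surjective_iff
    (hle : V.unitGroup ≤ S.unitGroup.comap (Units.map (algebraMap K L : K →+* L).toMonoidHom)) :
    Function.Surjective (QuotientGroup.map V.unitGroup S.unitGroup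
        (Units.map (algebraMap K L : K →+* L).toMonoidHom) hle) ↔
      ∀ y : Lˣ, ∃ x : Kˣ, S.valuation (algebraMap K L x) = S.valuation y := by
  simp only [QuotientGroup.map_surjective_iff, mk_eq_mk_iff_valuation_eq]
  rfl

instance valuationRing_toSubring (A : ValuationSubring K) : ValuationRing A.toSubring :=
  inferInstanceAs (ValuationRing A)

theorem associated_iff_valuation_eq (A : ValuationSubring K) {a b : A.toSubring} :
    Associated a b ↔ A.valuation a = A.valuation b := by
  rw [Associated.comm, valuation_eq_iff]
  exact exists_congr fun u => by rw [mul_comm, Subtype.ext_iff]; rfl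

theorem forall_exists_associated_iff {F : V →+* S.toSubring}
    (hF : ∀ a, (F a : L) = algebraMap K L a) (hle : S.comap (algebraMap K L) ≤ V) :
    (∀ s : S.toSubring, ∃ a : V, Associated (F a) s) ↔
      ∀ y : Lˣ, ∃ x : Kˣ, S.valuation (algebraMap K L x) = S.valuation y := by
  have hassoc (a : V) (s : S.toSubring) :
      Associated (F a) s ↔ S.valuation (algebraMap K L a) = S.valuation s := by
    rw [associated_iff_valuation_eq, hF]
  constructor
  · intro h
    suffices hS : ∀ y : Lˣ, (y : L) ∈ S →
        ∃ x : Kˣ, S.valuation (algebraMap K L x) = S.valuation y by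
      intro y
      rcases S.mem_or_inv_mem y with hy | hy
      · exact hS y hy
      · obtain ⟨x, hx⟩ := hS y⁻¹ (by simpa using hy)
        exact ⟨x⁻¹, by simp [hx]⟩
    intro y hy
    obtain ⟨a, ha⟩ := h ⟨y, hy⟩
    have hv := (hassoc a _).mp ha
    have ha0 : (a : K) ≠ 0 := by
      rintro h0
      rw [h0, map_zero, map_zero] at hv
      exact (Valuation.ne_zero_iff _).mpr y.ne_zero hv.symm
    exact ⟨Units.mk0 _ ha0, hv⟩
  · intro h s
    by_cases hs : s = 0
    · exact ⟨0, by rw [hs, map_zero]⟩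
    obtain ⟨x, hx⟩ := h (Units.mk0 (s : L) (by simpa using hs))
    have hxV : (x : K) ∈ V :=
      hle (mem_comap.mpr ((valuation_le_one_iff _ _).mp (hx ▸ (valuation_le_one_iff _ _).mpr s.2)))
    exact ⟨⟨x, hxV⟩, (hassoc _ _).mpr hx⟩

end ValuationSubring

/-- Let `V ⊆ S` be an inclusion of valuation domains (realized as
valuation subrings of their fraction fields `K ⊆ L`), with the maximal ideal of `V`
nonzero.  Then `S` is a content `V`-algebra if and only if the induced homomorphism of
value groups `Kˣ/Vˣ → Lˣ/Sˣ` is an isomorphism. -/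
theorem content_iff_valueGroup_iso {K L : Type*} [Field K] [Field L] [Algebra K L]
    (V : ValuationSubring K) (S : ValuationSubring L)
    (hVS : ∀ x : V, algebraMap K L x ∈ S)
    (hm : IsLocalRing.maximalIdeal V ≠ ⊥)
    (hle : V.unitGroup ≤
      S.unitGroup.comap (Units.map (algebraMap K L : K →+* L).toMonoidHom)) :
    IsContentAlgebra
        (RingHom.codRestrict ((algebraMap K L).comp V.subtype) S.toSubring
          (fun x => hVS x)) ↔
      Function.Bijective
        (QuotientGroup.map V.unitGroup S.unitGroup
          (Units.map (algebraMap K L : K →+* L).toMonoidHom) hle) := by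
  set F := RingHom.codRestrict ((algebraMap K L).comp V.subtype) S.toSubring (fun x => hVS x)
  have hF : ∀ a, (F a : L) = algebraMap K L a := fun _ => rfl
  obtain ⟨π, hπm, hπ0⟩ := Submodule.exists_mem_ne_zero_of_ne_bot hm
  have hπ : ¬IsUnit π := (IsLocalRing.mem_maximalIdeal π).mp hπm
  rw [Function.Bijective, ValuationSubring.map_unitGroup_injective_iff,
    ValuationSubring.map_unitGroup_surjective_iff]
  constructor
  · intro hC
    have hf (a b : V) : F a ∣ F b → a ∣ b := hC.2.1.dvd_of_map_dvd_map
    have hcomap := (ValuationSubring.comap_le_iff_dvd_of_map_dvd hF).mpr hf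
    exact ⟨hcomap, (ValuationSubring.forall_exists_associated_iff hF hcomap).mp
      (hC.exists_associated_map hf hπ0 hπ)⟩
  · rintro ⟨hcomap, hcover⟩
    exact isContentAlgebra_of_forall_exists_associated
      ((ValuationSubring.comap_le_iff_dvd_of_map_dvd hF).mp hcomap)
      ((ValuationSubring.forall_exists_associated_iff hF hcomap).mpr hcover)
end

section
/- Let R → S be a ring homomorphism making S a content R-algebra, where S is a valuation domain and R is not a field. Then the induced map Spec S → Spec R on prime spectra (with the Zariski topology) is a homeomorphism. -/
section ContentAux

variable {R S : Type*} [CommRing R] [CommRing S]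

theorem orContent_le {f : R →+* S} {s : S} {I : Ideal R} (h : s ∈ Ideal.map f I) :
    ORContent f s ≤ I := sInf_le h

theorem orContent_zero (f : R →+* S) : ORContent f 0 = ⊥ :=
  le_bot_iff.mp (orContent_le (Submodule.zero_mem _))

theorem orContent_mul_le {f : R →+* S} (hOR : IsOhmRushAlgebra f) (s t : S) :
    ORContent f (s * t) ≤ ORContent f s * ORContent f t := by
  apply orContent_le
  rw [Ideal.map_mul]
  exact Ideal.mul_mem_mul (hOR s) (hOR t)

theorem orContent_add_le {f : R →+* S} (hOR : IsOhmRushAlgebra f) (s t : S) :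
    ORContent f (s + t) ≤ ORContent f s ⊔ ORContent f t := by
  apply orContent_le
  rw [Ideal.map_sup]
  exact Submodule.add_mem _ (Submodule.mem_sup_left (hOR s)) (Submodule.mem_sup_right (hOR t))

/-- Purity: a faithfully flat ring map contracts extended ideal membership. -/
theorem mem_of_apply_mem_map {f : R →+* S} (hff : RingHomFaithfullyFlat f)
    {I : Ideal R} {r : R} (h : f r ∈ Ideal.map f I) : r ∈ I := by
  letI := f.toAlgebra
  haveI hFF : Module.FaithfullyFlat R S := hff
  haveI := hFF.toFlat
  have halg : algebraMap R S = f := rfl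
  set K : Ideal R := Submodule.colon I (Ideal.span {r}) with hKdef
  have hcond : K ≤ Submodule.comap (LinearMap.toSpanSingleton R R r) I := by
    intro x hx
    have := Ideal.mem_colon_span_singleton.mp hx
    simpa [LinearMap.toSpanSingleton_apply, smul_eq_mul] using this
  set φ : (R ⧸ K) →ₗ[R] (R ⧸ I) :=
    Submodule.mapQ K I (LinearMap.toSpanSingleton R R r) hcond with hφdef
  have hφinj : Function.Injective φ := by
    rw [← LinearMap.ker_eq_bot]
    rw [Submodule.eq_bot_iff]
    intro x hx
    obtain ⟨y, rfl⟩ := Submodule.Quotient.mk_surjective K x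
    rw [LinearMap.mem_ker, hφdef, Submodule.mapQ_apply] at hx
    rw [Submodule.Quotient.mk_eq_zero] at hx
    rw [Submodule.Quotient.mk_eq_zero]
    rw [hKdef, Ideal.mem_colon_span_singleton]
    simpa [LinearMap.toSpanSingleton_apply, smul_eq_mul] using hx
  have hTinj : Function.Injective (LinearMap.rTensor S φ) :=
    Module.Flat.rTensor_preserves_injective_linearMap φ hφinj
  have h1 : (Submodule.Quotient.mk r : R ⧸ I) ⊗ₜ[R] (1 : S) = 0 := by
    apply (TensorProduct.quotTensorEquivQuotSMul S I).injective
    rw [map_zero, Ideal.Quotient.mk_eq_mk,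
      TensorProduct.quotTensorEquivQuotSMul_mk_tmul]
    rw [Submodule.Quotient.mk_eq_zero, Ideal.smul_top_eq_map]
    show r • (1 : S) ∈ Ideal.map (algebraMap R S) I
    rw [Algebra.smul_def, mul_one, halg]
    exact h
  have h2 : LinearMap.rTensor S φ ((Submodule.Quotient.mk 1 : R ⧸ K) ⊗ₜ[R] (1 : S)) = 0 := by
    rw [LinearMap.rTensor_tmul, hφdef, Submodule.mapQ_apply]
    simpa [LinearMap.toSpanSingleton_apply] using h1
  have h3 : (Submodule.Quotient.mk 1 : R ⧸ K) ⊗ₜ[R] (1 : S) = 0 := by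
    apply hTinj
    rw [h2, map_zero]
  have h4 := congrArg (TensorProduct.quotTensorEquivQuotSMul S K) h3
  rw [map_zero, Ideal.Quotient.mk_eq_mk, TensorProduct.quotTensorEquivQuotSMul_mk_tmul] at h4
  rw [Submodule.Quotient.mk_eq_zero, Ideal.smul_top_eq_map] at h4
  have h5 : (1 : S) ∈ Ideal.map (algebraMap R S) K := by
    simpa using h4
  have h6 : K • (⊤ : Submodule R S) = ⊤ := by
    rw [Ideal.smul_top_eq_map, Submodule.restrictScalars_eq_top_iff]
    exact Ideal.eq_top_iff_one _ |>.mpr h5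
  have h7 : K = ⊤ :=
    ((Module.FaithfullyFlat.iff_flat_and_ideal_smul_eq_top R S).mp hFF).2 K h6
  have : (1 : R) ∈ K := h7 ▸ Submodule.mem_top
  have := Ideal.mem_colon_span_singleton.mp this
  simpa using this

theorem orContent_apply {f : R →+* S} (hff : RingHomFaithfullyFlat f) (r : R) :
    ORContent f (f r) = Ideal.span {r} := by
  refine le_antisymm (orContent_le (Ideal.mem_map_of_mem f (Ideal.mem_span_singleton_self r))) ?_
  refine le_sInf fun I hI => ?_
  rw [Ideal.span_singleton_le_iff_mem]
  exact mem_of_apply_mem_map hff hI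

theorem orContent_one {f : R →+* S} (hff : RingHomFaithfullyFlat f) :
    ORContent f (1 : S) = ⊤ := by
  have := orContent_apply hff (1 : R)
  rw [map_one] at this
  rw [this, Ideal.span_singleton_one]

theorem f_injective {f : R →+* S} (hff : RingHomFaithfullyFlat f) :
    Function.Injective f := by
  intro a b hab
  have h0 : f (a - b) = 0 := by rw [map_sub, hab, sub_self]
  have := orContent_apply hff (a - b)
  rw [h0, orContent_zero] at this
  have := Ideal.span_singleton_eq_bot.mp this.symm
  exact sub_eq_zero.mp this

theorem span_cancel {f : R →+* S} [IsDomain S] (hinj : Function.Injective f)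
    {d : R} (hd : d ≠ 0) {I J : Ideal R}
    (h : Ideal.span {d} * I = Ideal.span {d} * J) : I = J := by
  have key : ∀ {I J : Ideal R}, Ideal.span {d} * I = Ideal.span {d} * J → I ≤ J := by
    intro I J h x hx
    have hmem : d * x ∈ Ideal.span {d} * J :=
      h ▸ Ideal.mul_mem_mul (Ideal.mem_span_singleton_self d) hx
    obtain ⟨z, hz, hdz⟩ := Ideal.mem_span_singleton_mul.mp hmem
    have : f d * f z = f d * f x := by
      rw [← map_mul, ← map_mul, hdz]
    have hfd : f d ≠ 0 := fun h0 => hd (hinj (by rw [h0, map_zero]))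
    have := mul_left_cancel₀ hfd this
    exact hinj this ▸ hz
  exact le_antisymm (key h) (key h.symm)

variable [IsDomain S]

/-- Multiplicativity of content on elements from the base ring. -/
theorem orContent_fmul {f : R →+* S} (hff : RingHomFaithfullyFlat f)
    (hDM : ∀ s t : S, ∃ n : ℕ, 0 < n ∧
      ORContent f s ^ n * ORContent f t = ORContent f s ^ (n - 1) * ORContent f (s * t))
    {b : R} (hb : b ≠ 0) (y : S) :
    ORContent f (f b * y) = Ideal.span {b} * ORContent f y := by
  obtain ⟨n, hn, heq⟩ := hDM (f b) y
  rw [orContent_apply hff] at heq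
  obtain ⟨m, rfl⟩ : ∃ m, n = m + 1 := ⟨n - 1, (Nat.succ_pred_eq_of_pos hn).symm⟩
  rw [Nat.add_sub_cancel, pow_succ] at heq
  rw [mul_assoc] at heq
  rw [Ideal.span_singleton_pow] at heq
  have hbm : b ^ m ≠ 0 := by
    intro h0
    have h1 : f b ^ m = 0 := by rw [← map_pow, h0, map_zero]
    have h2 : f b = 0 := (pow_eq_zero_iff'.mp h1).1
    exact hb (f_injective hff (by rw [h2, map_zero]))
  exact (span_cancel (f_injective hff) hbm heq).symm

variable [ValuationRing S]

/-- Key lemma: if `R` is not a field, an element of content `⊤` is a unit. -/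
theorem isUnit_of_orContent_eq_top {f : R →+* S} (hR : ¬ IsField R)
    (hOR : IsOhmRushAlgebra f) (hff : RingHomFaithfullyFlat f)
    (hDM : ∀ s t : S, ∃ n : ℕ, 0 < n ∧
      ORContent f s ^ n * ORContent f t = ORContent f s ^ (n - 1) * ORContent f (s * t))
    {u : S} (hu : ORContent f u = ⊤) : IsUnit u := by
  haveI : Nontrivial R := f.domain_nontrivial
  obtain ⟨a, ha0, hau⟩ := Ring.exists_not_isUnit_of_not_isField hR
  have hfa : f a ≠ 0 := fun h0 => ha0 (f_injective hff (by rw [h0, map_zero]))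
  obtain ⟨z, hz | hz⟩ := ValuationRing.cond u (f a)
  · -- u * z = f a
    obtain ⟨n, hn, heq⟩ := hDM u z
    rw [hu, Ideal.top_pow, Ideal.top_pow, Ideal.top_mul, Ideal.top_mul] at heq
    rw [hz, orContent_apply hff] at heq
    have hzmem : z ∈ Ideal.map f (Ideal.span {a}) := heq ▸ hOR z
    rw [Ideal.map_span, Set.image_singleton, Ideal.mem_span_singleton] at hzmem
    obtain ⟨y, hy⟩ := hzmem
    have hkey : f a * (u * y) = f a * 1 := by
      rw [mul_one]
      calc f a * (u * y) = u * (f a * y) := by ring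
        _ = u * z := by rw [← hy]
        _ = f a := hz
    exact isUnit_iff_exists_inv.mpr ⟨y, mul_left_cancel₀ hfa hkey⟩
  · -- f a * z = u
    exfalso
    apply hau
    have hle : (⊤ : Ideal R) ≤ Ideal.span {a} := by
      rw [← hu, ← hz]
      calc ORContent f (f a * z) ≤ ORContent f (f a) * ORContent f z :=
            orContent_mul_le hOR _ _
        _ ≤ ORContent f (f a) := Ideal.mul_le_left
        _ ≤ Ideal.span {a} :=
            orContent_le (Ideal.mem_map_of_mem f (Ideal.mem_span_singleton_self a))
    have : (1 : R) ∈ Ideal.span {a} := hle Submodule.mem_top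
    exact isUnit_of_dvd_one (Ideal.mem_span_singleton.mp this)

/-- Claim A: elements of a prime ideal have content inside the contraction. -/
theorem orContent_le_comap {f : R →+* S} (hR : ¬ IsField R)
    (hOR : IsOhmRushAlgebra f) (hff : RingHomFaithfullyFlat f)
    (hDM : ∀ s t : S, ∃ n : ℕ, 0 < n ∧
      ORContent f s ^ n * ORContent f t = ORContent f s ^ (n - 1) * ORContent f (s * t))
    {Q : Ideal S} (hQ : Q.IsPrime) {s : S} (hs : s ∈ Q) :
    ORContent f s ≤ Q.comap f := by
  by_contra hcon
  obtain ⟨b, hb, hbn⟩ := SetLike.not_le_iff_exists.mp hcon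
  have hfb : f b ∉ Q := fun h => hbn (Ideal.mem_comap.mpr h)
  have hb0 : b ≠ 0 := by
    rintro rfl
    exact hfb (by rw [map_zero]; exact Q.zero_mem)
  obtain ⟨y, hy | hy⟩ := ValuationRing.cond (f b) s
  · -- f b * y = s
    have hyQ : y ∈ Q := (hQ.mem_or_mem (hy ▸ hs : f b * y ∈ Q)).resolve_left hfb
    have hmul := orContent_fmul hff hDM hb0 y
    rw [hy] at hmul
    have hbmem : b ∈ Ideal.span {b} * ORContent f y := hmul ▸ hb
    obtain ⟨x, hx, hbx⟩ := Ideal.mem_span_singleton_mul.mp hbmem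
    have hfb0 : f b ≠ 0 := fun h0 => hb0 (f_injective hff (by rw [h0, map_zero]))
    have hx1 : x = 1 := by
      apply f_injective hff
      apply mul_left_cancel₀ hfb0
      rw [← map_mul, hbx, map_one, mul_one]
    have htop : ORContent f y = ⊤ :=
      Ideal.eq_top_iff_one _ |>.mpr (hx1 ▸ hx)
    have := isUnit_of_orContent_eq_top hR hOR hff hDM htop
    exact hQ.ne_top (Ideal.eq_top_of_isUnit_mem Q hyQ this)
  · -- s * y = f b
    exact hfb (hy ▸ Ideal.mul_mem_right y Q hs)

end ContentAux

section Fiber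

variable {R S : Type*} [CommRing R] [CommRing S]

/-- The candidate prime of `S` over the prime `p` of `R`: elements of content `≤ p`. -/
def contentFiber (f : R →+* S) (hOR : IsOhmRushAlgebra f) (p : Ideal R) : Ideal S where
  carrier := {s | ORContent f s ≤ p}
  add_mem' := fun {s t} hs ht =>
    le_trans (orContent_add_le hOR s t) (sup_le hs ht)
  zero_mem' := by
    show ORContent f 0 ≤ p
    rw [orContent_zero]; exact bot_le
  smul_mem' := fun x s hs => by
    show ORContent f (x * s) ≤ p
    exact le_trans (orContent_mul_le hOR x s) (le_trans Ideal.mul_le_right hs)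

theorem mem_contentFiber {f : R →+* S} {hOR : IsOhmRushAlgebra f} {p : Ideal R} {s : S} :
    s ∈ contentFiber f hOR p ↔ ORContent f s ≤ p := Iff.rfl

theorem contentFiber_isPrime {f : R →+* S} (hOR : IsOhmRushAlgebra f)
    (hff : RingHomFaithfullyFlat f)
    (hDM : ∀ s t : S, ∃ n : ℕ, 0 < n ∧
      ORContent f s ^ n * ORContent f t = ORContent f s ^ (n - 1) * ORContent f (s * t))
    {p : Ideal R} (hp : p.IsPrime) : (contentFiber f hOR p).IsPrime := by
  constructor
  · intro htop
    have h1 : (1 : S) ∈ contentFiber f hOR p := htop ▸ Submodule.mem_top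
    rw [mem_contentFiber, orContent_one hff] at h1
    exact hp.ne_top (top_le_iff.mp h1)
  · intro s t hst
    rw [mem_contentFiber] at hst
    obtain ⟨n, hn, heq⟩ := hDM s t
    have h1 : ORContent f s ^ n * ORContent f t ≤ p := by
      rw [heq]
      exact le_trans Ideal.mul_le_right hst
    haveI := hp
    rcases hp.mul_le.mp h1 with h | h
    · exact Or.inl (Ideal.IsPrime.le_of_pow_le h)
    · exact Or.inr h

theorem comap_contentFiber {f : R →+* S} (hOR : IsOhmRushAlgebra f)
    (hff : RingHomFaithfullyFlat f) (p : Ideal R) :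
    (contentFiber f hOR p).comap f = p := by
  ext r
  rw [Ideal.mem_comap, mem_contentFiber, orContent_apply hff,
    Ideal.span_singleton_le_iff_mem]

theorem contentFiber_comap {f : R →+* S} [IsDomain S] [ValuationRing S]
    (hR : ¬ IsField R) (hOR : IsOhmRushAlgebra f) (hff : RingHomFaithfullyFlat f)
    (hDM : ∀ s t : S, ∃ n : ℕ, 0 < n ∧
      ORContent f s ^ n * ORContent f t = ORContent f s ^ (n - 1) * ORContent f (s * t))
    {Q : Ideal S} (hQ : Q.IsPrime) :
    contentFiber f hOR (Q.comap f) = Q := by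
  apply le_antisymm
  · intro s hs
    rw [mem_contentFiber] at hs
    exact Ideal.map_comap_le (Ideal.map_mono hs (hOR s))
  · intro s hs
    rw [mem_contentFiber]
    exact orContent_le_comap hR hOR hff hDM hQ hs

end Fiber

/-- If `R → S` is a content algebra map with `S` a valuation domain and
`R` not a field, then `Spec S → Spec R` is a homeomorphism. -/
theorem spec_homeomorph_of_content_valuation {R S : Type*} [CommRing R]
    [CommRing S] [IsDomain S] [ValuationRing S]
    (hR : ¬ IsField R) (f : R →+* S) (hf : IsContentAlgebra f) :
    IsHomeomorph (PrimeSpectrum.comap f) := by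
  obtain ⟨hOR, hff, hDM⟩ := hf
  let σ : PrimeSpectrum R → PrimeSpectrum S := fun p =>
    ⟨contentFiber f hOR p.asIdeal, contentFiber_isPrime hOR hff hDM p.isPrime⟩
  have hright : ∀ p : PrimeSpectrum R, PrimeSpectrum.comap f (σ p) = p := fun p =>
    PrimeSpectrum.ext (by
      rw [PrimeSpectrum.comap_asIdeal]
      exact comap_contentFiber hOR hff p.asIdeal)
  have hleft : ∀ Q : PrimeSpectrum S, σ (PrimeSpectrum.comap f Q) = Q := fun Q =>
    PrimeSpectrum.ext (by
      show contentFiber f hOR (PrimeSpectrum.comap f Q).asIdeal = Q.asIdeal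
      rw [PrimeSpectrum.comap_asIdeal]
      exact contentFiber_comap hR hOR hff hDM Q.isPrime)
  have hσcont : Continuous σ := by
    rw [continuous_iff_isClosed]
    intro C hC
    obtain ⟨T, rfl⟩ := (PrimeSpectrum.isClosed_iff_zeroLocus C).mp hC
    have heq : σ ⁻¹' PrimeSpectrum.zeroLocus T =
        PrimeSpectrum.zeroLocus (⋃ s ∈ T, (ORContent f s : Set R)) := by
      ext p
      rw [Set.mem_preimage, PrimeSpectrum.mem_zeroLocus, PrimeSpectrum.mem_zeroLocus]
      constructor
      · intro h
        refine Set.iUnion₂_subset fun s hsT => ?_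
        exact SetLike.coe_subset_coe.mpr (h hsT)
      · intro h s hsT
        show s ∈ (σ p).asIdeal
        exact SetLike.coe_subset_coe.mp ((Set.subset_iUnion₂ s hsT).trans h)
    rw [heq]
    exact PrimeSpectrum.isClosed_zeroLocus _
  exact (Homeomorph.mk ⟨PrimeSpectrum.comap f, σ, hleft, hright⟩
    (PrimeSpectrum.continuous_comap f) hσcont).isHomeomorph
end
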